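/- arXiv:0801.1979 — 7 statements merged into one kernel-verified Lean document; each statement's English description precedes it below -/
import Mathlib

section
/- Let D be an acyclic digraph with unique vertex r of in-degree zero, and let B be its associated bipartite graph. If M is a maximum matching of B, then the minimum number of leaves over all out-branchings of D equals the number of vertices of X not covered by M. -/
/-- `T` is an out-branching (spanning out-tree) of the digraph `D`, rooted at `r`:
`T` is a subdigraph of `D`, `r` has in-degree 0 in `T`, every other vertex has
in-degree exactly 1 in `T`, and every vertex is reachable from `r` in `T`. -/
def IsOutBranching {α : Type*} (D T : α → α → Prop) (r : α) : Prop :=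
  (∀ u v, T u v → D u v) ∧ (∀ u, ¬ T u r) ∧
  (∀ v, v ≠ r → ∃! u, T u v) ∧ (∀ v, Relation.ReflTransGen T r v)

/-- The number of leaves (vertices of out-degree 0) of `T`. -/
noncomputable def numLeaves {α : Type*} (T : α → α → Prop) : ℕ :=
  {v | ∀ w, ¬ T v w}.ncard

/-- The number of internal vertices (vertices of positive out-degree) of `T`. -/
noncomputable def numInternal {α : Type*} (T : α → α → Prop) : ℕ :=
  {v | ∃ w, T v w}.ncard

/-- A matching of the bipartite graph `B` associated with an acyclic digraph `D`
with unique source `r`: parts `X = V`, `X' = V \ {r}`, edges `{x,y'}` iff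
`(x,y) ∈ A(D)`. A matching is a set of such edges, pairwise sharing no endpoint. -/
def IsBMatching {α : Type*} (D : α → α → Prop) (r : α) (M : Set (α × α)) : Prop :=
  (∀ p ∈ M, D p.1 p.2 ∧ p.2 ≠ r) ∧
  (∀ p ∈ M, ∀ q ∈ M, (p.1 = q.1 ∨ p.2 = q.2) → p = q)

/-- For an acyclic digraph `D` with unique in-degree-zero vertex `r` and a maximum
matching `M` of the associated bipartite graph `B`, the minimum number of leaves over
all out-branchings of `D` equals the number of vertices of `X = V` not covered by `M`. -/
theorem stmt_3 {V : Type*} [Fintype V] (D : V → V → Prop) (r : V) (M : Set (V × V))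
    (hacyc : ∀ v, ¬ Relation.TransGen D v v)
    (hr : ∀ u, ¬ D u r) (huniq : ∀ v, (∀ u, ¬ D u v) → v = r)
    (hM : IsBMatching D r M)
    (hmax : ∀ M' : Set (V × V), IsBMatching D r M' → M'.ncard ≤ M.ncard) :
    IsLeast {l | ∃ (T : V → V → Prop) (ρ : V), IsOutBranching D T ρ ∧ numLeaves T = l}
      {x : V | ∀ y, (x, y) ∉ M}.ncard := by

  classical
  obtain ⟨hM1, hM2⟩ := hM
  set n := Fintype.card V with hn
  -- covered first coordinates
  have hinj : Set.InjOn Prod.fst M := fun p hp q hq h => hM2 p hp q hq (Or.inl h)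
  have hCcard : (Prod.fst '' M).ncard = M.ncard := Set.ncard_image_of_injOn hinj
  have hcompl : {x : V | ∀ y, (x, y) ∉ M} = (Prod.fst '' M)ᶜ := by
    ext x
    constructor
    · intro h hx
      obtain ⟨p, hp, hpx⟩ := (Set.mem_image _ _ _).mp hx
      have hpe : (x, p.2) = p := by rw [← hpx]
      exact h p.2 (hpe ▸ hp)
    · intro h y hy
      exact h ⟨(x, y), hy, rfl⟩
  have hCsum : (Prod.fst '' M).ncard + (Prod.fst '' M)ᶜ.ncard = n := by
    rw [Set.ncard_add_ncard_compl, hn, Nat.card_eq_fintype_card]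
  have huncov : {x : V | ∀ y, (x, y) ∉ M}.ncard + M.ncard = n := by
    rw [hcompl, ← hCcard]; omega
  -- generic count: leaves + internal = n
  have hsum : ∀ T : V → V → Prop, numLeaves T + numInternal T = n := by
    intro T
    have : {v | ∃ w, T v w} = {v | ∀ w, ¬ T v w}ᶜ := by
      ext v; simp [Set.mem_compl_iff]
    rw [numLeaves, numInternal, this, Set.ncard_add_ncard_compl, hn,
      Nat.card_eq_fintype_card]
  -- lower bound: any out-branching's internal count ≤ |M|
  have lb : ∀ (T : V → V → Prop) (ρ : V), IsOutBranching D T ρ →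
      numInternal T ≤ M.ncard := by
    rintro T ρ ⟨hTD, hTr, hTu, _⟩
    set ch : V → V := fun v => if h : ∃ w, T v w then h.choose else v with hch
    have hchT : ∀ v, (∃ w, T v w) → T v (ch v) := by
      intro v h
      simp only [hch, dif_pos h]
      exact h.choose_spec
    set M' : Set (V × V) := (fun v => (v, ch v)) '' {v | ∃ w, T v w} with hM'
    have hmatch : IsBMatching D r M' := by
      constructor
      · rintro p ⟨v, hv, rfl⟩
        have hTv := hchT v hv
        refine ⟨hTD _ _ hTv, fun hrc => ?_⟩
        have hD := hTD _ _ hTv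
        simp only at hrc
        rw [hrc] at hD
        exact hr v hD
      · rintro p ⟨v, hv, rfl⟩ q ⟨w, hw, rfl⟩ h
        simp only at h ⊢
        have hTv := hchT v hv
        have hTw := hchT w hw
        rcases h with h | h
        · subst h; rfl
        · have hvr : ch v ≠ ρ := by
            intro e; rw [e] at hTv; exact hTr v hTv
          obtain ⟨u, _, huu⟩ := hTu (ch v) hvr
          have h1 := huu v hTv
          have h2 := huu w (by rw [h]; exact hTw)
          have hvw : v = w := h1.trans h2.symm
          subst hvw
          simp [h]
    have hle := hmax M' hmatch
    have : M'.ncard = {v | ∃ w, T v w}.ncard :=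
      Set.ncard_image_of_injOn (fun a _ b _ h => congrArg Prod.fst h)
    rw [numInternal]
    omega
  -- construction of an out-branching from M
  set par : V → V := fun v =>
    if h : ∃ u, (u, v) ∈ M then h.choose
    else if h2 : ∃ u, D u v then h2.choose else v with hpar
  set T : V → V → Prop := fun u v => v ≠ r ∧ u = par v with hT
  have hparM : ∀ u v, (u, v) ∈ M → par v = u := by
    intro u v huv
    have h : ∃ u, (u, v) ∈ M := ⟨u, huv⟩
    have hcs := h.choose_spec
    have heq := hM2 _ hcs _ huv (Or.inr rfl)
    simp only [hpar, dif_pos h]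
    exact congrArg Prod.fst heq
  have hparD : ∀ v, v ≠ r → D (par v) v := by
    intro v hv
    by_cases h : ∃ u, (u, v) ∈ M
    · simp only [hpar, dif_pos h]
      exact (hM1 _ h.choose_spec).1
    · have h2 : ∃ u, D u v := by
        by_contra h2
        push_neg at h2
        exact hv (huniq v h2)
      simp only [hpar, dif_neg h, dif_pos h2]
      exact h2.choose_spec
  have hTD : ∀ u v, T u v → D u v := by
    rintro u v ⟨hv, rfl⟩
    exact hparD v hv
  -- reachability via well-foundedness of TransGen D
  haveI : IsTrans V (Relation.TransGen D) := ⟨fun _ _ _ => Relation.TransGen.trans⟩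
  haveI : IsIrrefl V (Relation.TransGen D) := ⟨hacyc⟩
  have hwf : WellFounded (Relation.TransGen D) :=
    Finite.wellFounded_of_trans_of_irrefl _
  have hreach : ∀ v, Relation.ReflTransGen T r v := by
    intro v
    induction v using hwf.induction with
    | _ v ih =>
      by_cases hv : v = r
      · subst hv; exact Relation.ReflTransGen.refl
      · exact (ih (par v) (Relation.TransGen.single (hparD v hv))).tail ⟨hv, rfl⟩
  have hOB : IsOutBranching D T r :=
    ⟨hTD, fun u h => h.1 rfl, fun v hv => ⟨par v, ⟨hv, rfl⟩, fun u hu => hu.2⟩, hreach⟩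
  -- internal vertices of T include all of fst '' M
  have hCsub : Prod.fst '' M ⊆ {v | ∃ w, T v w} := by
    rintro x ⟨⟨a, b⟩, hab, rfl⟩
    exact ⟨b, (hM1 _ hab).2, (hparM a b hab).symm⟩
  have hIge : M.ncard ≤ numInternal T := by
    rw [← hCcard, numInternal]
    exact Set.ncard_le_ncard hCsub (Set.toFinite _)
  have hIle := lb T r hOB
  have hsumT := hsum T
  constructor
  · exact ⟨T, r, hOB, by omega⟩
  · rintro l ⟨T', ρ, hT', rfl⟩
    have := lb T' ρ hT'
    have := hsum T'
    omega
end

section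
/- Let D be an acyclic digraph with unique vertex r of in-degree zero and associated bipartite graph B. Then every maximum matching of B covers the vertex r ∈ X. -/
/-- For an acyclic digraph `D` (with at least one vertex besides `r`) with unique
in-degree-zero vertex `r`, every maximum matching of the associated bipartite graph
covers the vertex `r` of `X`. -/
theorem stmt_4 {V : Type*} [Fintype V] (D : V → V → Prop) (r : V) (M : Set (V × V))
    (hacyc : ∀ v, ¬ Relation.TransGen D v v)
    (hr : ∀ u, ¬ D u r) (huniq : ∀ v, (∀ u, ¬ D u v) → v = r)
    (hnontriv : ∃ v : V, v ≠ r)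
    (hM : IsBMatching D r M)
    (hmax : ∀ M' : Set (V × V), IsBMatching D r M' → M'.ncard ≤ M.ncard) :
    ∃ y, (r, y) ∈ M := by
  by_contra h
  push_neg at h
  -- well-foundedness of TransGen D
  haveI : IsTrans V (Relation.TransGen D) := ⟨fun _ _ _ => Relation.TransGen.trans⟩
  haveI : IsIrrefl V (Relation.TransGen D) := ⟨hacyc⟩
  have hwf : WellFounded (Relation.TransGen D) :=
    Finite.wellFounded_of_trans_of_irrefl _
  obtain ⟨v0, hv0⟩ := hnontriv
  obtain ⟨u, hu, hmin⟩ := hwf.has_min {v | v ≠ r} ⟨v0, hv0⟩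
  -- every in-neighbor of u is r
  have honly : ∀ x, D x u → x = r := by
    intro x hx
    by_contra hxr
    exact hmin x hxr (Relation.TransGen.single hx)
  -- u has an in-neighbor, hence D r u
  have hDru : D r u := by
    by_contra hnd
    exact hu (huniq u (fun x hx => hnd (honly x hx ▸ hx)))
  -- (r,u) ∉ M, and no edge in M ends at u
  have hnotM : (r, u) ∉ M := fun hmem => h u hmem
  have hnoend : ∀ p ∈ M, p.2 ≠ u := by
    intro p hp hpu
    have : p.1 = r := honly p.1 (hpu ▸ (hM.1 p hp).1)
    exact h p.2 (by rwa [show p = (r, p.2) from Prod.ext this rfl] at hp)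
  -- build a bigger matching
  have hM' : IsBMatching D r (insert (r, u) M) := by
    constructor
    · intro p hp
      rcases hp with hp | hp
      · rw [hp]; exact ⟨hDru, hu⟩
      · exact hM.1 p hp
    · intro p hp q hq hpq
      rcases hp with hp | hp <;> rcases hq with hq | hq
      · rw [hp, hq]
      · exfalso
        rcases hpq with h1 | h2
        · have hq1 : q.1 = r := by rw [← h1, hp]
          exact h q.2 (by rwa [show q = (r, q.2) from Prod.ext hq1 rfl] at hq)
        · exact hnoend q hq (by rw [← h2, hp])
      · exfalso
        rcases hpq with h1 | h2
        · have hp1 : p.1 = r := by rw [h1, hq]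
          exact h p.2 (by rwa [show p = (r, p.2) from Prod.ext hp1 rfl] at hp)
        · exact hnoend p hp (by rw [h2, hq])
      · exact hM.2 p hp q hq hpq
  have hfin : M.Finite := Set.toFinite M
  have hcard : (insert (r, u) M).ncard = M.ncard + 1 :=
    Set.ncard_insert_of_notMem hnotM hfin
  have := hmax _ hM'
  omega
end

section
/- Let D be an acyclic digraph with unique vertex r of in-degree zero, B its associated bipartite graph, M a maximum matching of B, and M* any extension of M covering all of X' obtained by adding, for each uncovered y' ∈ X', one arbitrary edge incident with y'. Then the set of arcs T = {(x,y) : x y' ∈ M*} is an out-branching of D whose leaf set is exactly X \ V(M). -/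
/-- For an acyclic digraph `D` with unique source `r`, a maximum matching `M` of the
associated bipartite graph `B`, and an extension `Mstar ⊇ M` consisting of edges of
`B` that covers every vertex of `X' = V \ {r}` exactly once (as produced by adding one
arbitrary incident edge for each `M`-uncovered `y' ∈ X'`), the arc set
`T = {(x,y) : xy' ∈ Mstar}` is an out-branching of `D` rooted at `r` whose leaf set is
exactly `X \ V(M)`, the set of `X`-vertices not covered by `M`. -/
theorem stmt_5 {V : Type*} [Fintype V] (D : V → V → Prop) (r : V) (M Mstar : Set (V × V))
    (hacyc : ∀ v, ¬ Relation.TransGen D v v)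
    (hr : ∀ u, ¬ D u r) (huniq : ∀ v, (∀ u, ¬ D u v) → v = r)
    (hM : IsBMatching D r M)
    (hmax : ∀ M' : Set (V × V), IsBMatching D r M' → M'.ncard ≤ M.ncard)
    (hsub : M ⊆ Mstar)
    (hedges : ∀ p ∈ Mstar, D p.1 p.2 ∧ p.2 ≠ r)
    (hcov : ∀ y : V, y ≠ r → ∃! x, (x, y) ∈ Mstar) :
    IsOutBranching D (fun x y => (x, y) ∈ Mstar) r ∧
      {v : V | ∀ w, ¬ (fun x y => (x, y) ∈ Mstar) v w} = {x : V | ∀ y, (x, y) ∉ M} := by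
  classical
  constructor
  · refine ⟨fun u v h => (hedges _ h).1, fun u h => (hedges _ h).2 rfl,
      fun v hv => hcov v hv, ?_⟩
    have hirr : IsIrrefl V (Relation.TransGen D) := ⟨hacyc⟩
    have hwf : WellFounded (Relation.TransGen D) :=
      Finite.wellFounded_of_trans_of_irrefl _
    intro v
    induction v using hwf.induction with
    | _ v ih =>
      by_cases hv : v = r
      · subst hv; exact Relation.ReflTransGen.refl
      · obtain ⟨u, hu, -⟩ := hcov v hv
        exact (ih u (Relation.TransGen.single ((hedges _ hu).1))).tail hu
  · ext x
    simp only [Set.mem_setOf_eq]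
    constructor
    · intro h y hy
      exact h y (hsub hy)
    · intro h w hw
      have hw2 := hedges _ hw
      by_cases hy : ∃ u, (u, w) ∈ M
      · obtain ⟨u, hu⟩ := hy
        have heq : x = u := (hcov w hw2.2).unique hw (hsub hu)
        exact h w (heq ▸ hu)
      · push_neg at hy
        have hM' : IsBMatching D r (insert (x, w) M) := by
          constructor
          · intro p hp
            rcases Set.mem_insert_iff.1 hp with hp1 | hp1
            · rw [hp1]; exact hw2
            · exact hM.1 p hp1
          · intro p hp q hq hpq
            rcases Set.mem_insert_iff.1 hp with hp1 | hp1 <;>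
              rcases Set.mem_insert_iff.1 hq with hq1 | hq1
            · rw [hp1, hq1]
            · exfalso
              rcases hpq with h1 | h2
              · have hx : q.1 = x := by rw [← h1, hp1]
                have : (x, q.2) ∈ M := by rw [← hx]; simpa using hq1
                exact h q.2 this
              · have hx : q.2 = w := by rw [← h2, hp1]
                have : (q.1, w) ∈ M := by rw [← hx]; simpa using hq1
                exact hy q.1 this
            · exfalso
              rcases hpq with h1 | h2
              · have hx : p.1 = x := by rw [h1, hq1]
                have : (x, p.2) ∈ M := by rw [← hx]; simpa using hp1
                exact h p.2 this
              · have hx : p.2 = w := by rw [h2, hq1]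
                have : (p.1, w) ∈ M := by rw [← hx]; simpa using hp1
                exact hy p.1 this
            · exact hM.2 p hp1 q hq1 hpq
        have hne : (x, w) ∉ M := fun hmem => h w hmem
        have hle := hmax _ hM'
        rw [Set.ncard_insert_of_notMem hne (Set.toFinite M)] at hle
        omega
end

section
/- Let D be a digraph, v a vertex, and D_k the digraph obtained from D by adding k new vertices v_1,...,v_k and arcs (v,v_1),...,(v,v_k). Then D has a Hamiltonian directed path terminating at v if and only if D_k has an out-branching with at most k leaves. -/
/-!
Given a Hamiltonian path ending at `v`, hang the new vertices below `v`: the result is an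
out-branching whose leaves are exactly the `k` new vertices. Conversely, the new vertices are
always leaves, so in an out-branching with at most `k` leaves every old vertex other than `v` has
an old child. Arcs into old vertices come from old vertices, so the old vertices carry an
out-branching of `D` in which only `v` may be a leaf; being finite and acyclic, every vertex of it
descends to `v`, so the tree path from the root to `v` passes through every vertex.
-/

open Relation

section

variable {α β : Type*}

section OutBranching

variable {D T : α → α → Prop} {r : α}

theorem IsOutBranching.not_transGen_self (hT : IsOutBranching D T r) (a : α) :
    ¬ TransGen T a a := by
  obtain ⟨-, hroot, huniq, hreach⟩ := hT
  induction hreach a with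
  | refl =>
    intro h
    obtain ⟨u, -, hu⟩ := TransGen.tail'_iff.mp h
    exact hroot u hu
  | @tail b c _ hbc ih =>
    intro h
    obtain ⟨u, hcu, huc⟩ := TransGen.tail'_iff.mp h
    obtain ⟨w, -, hw⟩ := huniq c fun hc => hroot b (hc ▸ hbc)
    obtain rfl : u = b := (hw u huc).trans (hw b hbc).symm
    exact ih (TransGen.head' hbc hcu)

theorem IsOutBranching.exists_isChain_mem_iff (hT : IsOutBranching D T r) (t : α) :
    ∃ l : List α, l.IsChain T ∧ l.Nodup ∧ l.getLast? = some t ∧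
      ∀ a, a ∈ l ↔ ReflTransGen T a t := by
  obtain ⟨-, hroot, huniq, hreach⟩ := id hT
  induction hreach t with
  | refl =>
    refine ⟨[r], List.isChain_singleton r, List.nodup_singleton r, rfl, fun a => ?_⟩
    rw [List.mem_singleton]
    refine ⟨fun h => h ▸ ReflTransGen.refl, fun h => ?_⟩
    rcases h.cases_tail with h | ⟨u, -, hu⟩
    · exact h.symm
    · exact absurd hu (hroot u)
  | @tail b c _ hbc ih =>
    obtain ⟨l, hchain, hnodup, hlast, hmem⟩ := ih
    have hpred : ∀ u, T u c → u = b := by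
      obtain ⟨w, -, hw⟩ := huniq c fun hc => hroot b (hc ▸ hbc)
      exact fun u hu => (hw u hu).trans (hw b hbc).symm
    have hcl : c ∉ l := fun hcl => hT.not_transGen_self c (TransGen.tail' ((hmem c).1 hcl) hbc)
    refine ⟨l ++ [c], ?_, ?_, List.getLast?_concat, fun a => ?_⟩
    · refine List.isChain_append.2 ⟨hchain, List.isChain_singleton c, ?_⟩
      simp only [hlast, Option.mem_def, Option.some.injEq, List.head?_cons]
      rintro _ rfl _ rfl
      exact hbc
    · refine List.nodup_append.2 ⟨hnodup, List.nodup_singleton c, ?_⟩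
      rintro a ha _ hc rfl
      exact hcl (List.mem_singleton.1 hc ▸ ha)
    · rw [List.mem_append, List.mem_singleton, hmem]
      refine ⟨fun h => h.elim (·.tail hbc) (· ▸ ReflTransGen.refl), fun h => ?_⟩
      rcases h.cases_tail with h | ⟨u, hu, huc⟩
      · exact .inr h.symm
      · exact .inl (hpred u huc ▸ hu)

theorem reflTransGen_of_forall_exists_rel [Finite α] {R : α → α → Prop}
    (hR : ∀ a, ¬ TransGen R a a) {t : α} (hsucc : ∀ a, a ≠ t → ∃ b, R a b) (a : α) :
    ReflTransGen R a t := by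
  have : IsTrans α (Function.swap (TransGen R)) := ⟨fun _ _ _ h₁ h₂ => h₂.trans h₁⟩
  have : Std.Irrefl (Function.swap (TransGen R)) := ⟨hR⟩
  refine (Finite.wellFounded_of_trans_of_irrefl (Function.swap (TransGen R))).induction
    (C := (ReflTransGen R · t)) a fun a ih => ?_
  by_cases ha : a = t
  · exact ha ▸ ReflTransGen.refl
  · obtain ⟨b, hab⟩ := hsucc a ha
    exact ReflTransGen.head hab (ih b (TransGen.single hab))

theorem IsOutBranching.exists_hamiltonian_path [Finite α] (hT : IsOutBranching D T r) {t : α}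
    (hsucc : ∀ a, a ≠ t → ∃ b, T a b) :
    ∃ l : List α, l.IsChain D ∧ l.Nodup ∧ (∀ a, a ∈ l) ∧ l.getLast? = some t := by
  obtain ⟨l, hchain, hnodup, hlast, hmem⟩ := hT.exists_isChain_mem_iff t
  refine ⟨l, hchain.imp hT.1, hnodup, fun a => (hmem a).2 ?_, hlast⟩
  exact reflTransGen_of_forall_exists_rel hT.not_transGen_self hsucc a

end OutBranching

section Comap

variable {D T : α → α → Prop} {f : β → α}

theorem reflTransGen_comap (hf : f.Injective) (hclosed : ∀ a y, T a (f y) → ∃ x, a = f x)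
    {x y : β} (h : ReflTransGen T (f x) (f y)) : ReflTransGen (fun a b => T (f a) (f b)) x y := by
  generalize hb : f y = b at h
  induction h generalizing y with
  | refl => exact hf hb ▸ ReflTransGen.refl
  | @tail c _ _ hcb ih =>
    subst hb
    obtain ⟨z, rfl⟩ := hclosed c y hcb
    exact (ih rfl).tail hcb

theorem IsOutBranching.comap (hf : f.Injective) (hclosed : ∀ a y, T a (f y) → ∃ x, a = f x)
    {r : β} (hT : IsOutBranching D T (f r)) :
    IsOutBranching (fun a b => D (f a) (f b)) (fun a b => T (f a) (f b)) r := by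
  obtain ⟨hsub, hroot, huniq, hreach⟩ := hT
  refine ⟨fun a b => hsub (f a) (f b), fun a => hroot (f a), fun y hy => ?_,
    fun y => reflTransGen_comap hf hclosed (hreach (f y))⟩
  obtain ⟨u, hu, hpred⟩ := huniq (f y) (hf.ne hy)
  obtain ⟨x, rfl⟩ := hclosed u y hu
  exact ⟨x, hu, fun z hz => hf (hpred (f z) hz)⟩

end Comap

theorem exists_rel_of_numLeaves_le [Finite α] {T : α → α → Prop} {S : Set α}
    (hS : ∀ a ∈ S, ∀ b, ¬ T a b) (h : numLeaves T ≤ S.ncard) {a : α} (ha : a ∉ S) :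
    ∃ b, T a b := by
  by_contra! hleaf
  have hcard : (insert a S).ncard ≤ numLeaves T := Set.ncard_le_ncard (Set.insert_subset hleaf hS)
  rw [Set.ncard_insert_of_notMem ha] at hcard
  omega

def attachLeaves (T : α → α → Prop) (v : α) : α ⊕ β → α ⊕ β → Prop
  | .inl a, .inl b => T a b
  | .inl a, .inr _ => a = v
  | .inr _, _ => False

section AttachLeaves

variable {D T : α → α → Prop} {r v : α}

theorem isOutBranching_attachLeaves {D' : α ⊕ β → α ⊕ β → Prop} (hT : IsOutBranching D T r)
    (hD : ∀ a b, D a b → D' (.inl a) (.inl b)) (hv : ∀ i, D' (.inl v) (.inr i)) :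
    IsOutBranching D' (attachLeaves T v) (.inl r) := by
  obtain ⟨hsub, hroot, huniq, hreach⟩ := hT
  refine ⟨?_, ?_, ?_, ?_⟩
  · rintro (a | i) (b | j) h
    · exact hD a b (hsub a b h)
    · exact (h : a = v) ▸ hv j
    all_goals exact h.elim
  · rintro (a | i) h
    exacts [hroot a h, h]
  · rintro (b | j) hb
    · obtain ⟨u, hu, hpred⟩ := huniq b (Sum.inl_injective.ne_iff.mp hb)
      refine ⟨.inl u, hu, ?_⟩
      rintro (w | i) hw
      exacts [congrArg Sum.inl (hpred w hw), hw.elim]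
    · refine ⟨.inl v, rfl, ?_⟩
      rintro (w | i) hw
      exacts [congrArg Sum.inl hw, hw.elim]
  · have hlift (b : α) : ReflTransGen (attachLeaves T v) (.inl r) (.inl b : α ⊕ β) :=
      ReflTransGen.lift Sum.inl (fun _ _ h => h) _ _ (hreach b)
    rintro (b | j)
    exacts [hlift b, (hlift v).tail rfl]

theorem numLeaves_attachLeaves_le [Finite β] [Nonempty β] (hsucc : ∀ a, a ≠ v → ∃ b, T a b) :
    numLeaves (attachLeaves T v : α ⊕ β → α ⊕ β → Prop) ≤ Nat.card β := by
  have hsub : {a | ∀ b, ¬ attachLeaves T v a b} ⊆ Set.range (Sum.inr : β → α ⊕ β) := by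
    rintro (a | i) ha
    · by_cases hav : a = v
      · exact absurd hav (ha (.inr (Classical.arbitrary β)))
      · obtain ⟨b, hab⟩ := hsucc a hav
        exact absurd hab (ha (.inl b))
    · exact ⟨i, rfl⟩
  rw [← Set.ncard_range_of_injective Sum.inr_injective]
  exact Set.ncard_le_ncard hsub (Set.finite_range _)

end AttachLeaves

def pathOfList (l : List α) (a b : α) : Prop :=
  ∃ n, l[n]? = some a ∧ l[n + 1]? = some b

section PathOfList

variable {l : List α}

theorem List.IsChain.rel_of_pathOfList {R : α → α → Prop} (hl : l.IsChain R) {a b : α}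
    (h : pathOfList l a b) : R a b := by
  obtain ⟨n, ha, hb⟩ := h
  obtain ⟨-, rfl⟩ := List.getElem?_eq_some_iff.mp ha
  obtain ⟨hn, rfl⟩ := List.getElem?_eq_some_iff.mp hb
  exact hl.getElem n hn

theorem pathOfList_left_unique (hl : l.Nodup) {a b c : α} (ha : pathOfList l a c)
    (hb : pathOfList l b c) : a = b := by
  obtain ⟨n, ha, hac⟩ := ha
  obtain ⟨m, hb, hbc⟩ := hb
  have hn : n + 1 < l.length := (List.getElem?_eq_some_iff.mp hac).1
  obtain rfl : n = m := by
    have := (List.getElem?_inj hn hl).mp (hac.trans hbc.symm)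
    omega
  exact Option.some.inj (ha.symm.trans hb)

theorem isOutBranching_pathOfList {R : α → α → Prop} (hchain : l.IsChain R) (hl : l.Nodup)
    (hall : ∀ a, a ∈ l) (hne : l ≠ []) : IsOutBranching R (pathOfList l) (l.head hne) := by
  have hhead : l[0]? = some (l.head hne) := by
    rw [← List.head?_eq_getElem?, List.head?_eq_some_head hne]
  refine ⟨fun a b => hchain.rel_of_pathOfList, ?_, ?_, ?_⟩
  · rintro a ⟨n, -, hn⟩
    have := (List.getElem?_inj (List.getElem?_eq_some_iff.mp hn).1 hl).mp (hn.trans hhead.symm)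
    omega
  · intro b hb
    obtain ⟨m, hm⟩ := List.mem_iff_getElem?.mp (hall b)
    obtain ⟨n, rfl⟩ : ∃ n, m = n + 1 := Nat.exists_eq_succ_of_ne_zero fun h =>
      hb (Option.some.inj (hm.symm.trans (h ▸ hhead)))
    have hn : n < l.length := by have := (List.getElem?_eq_some_iff.mp hm).1; omega
    exact ⟨l[n], ⟨n, List.getElem?_eq_getElem hn, hm⟩,
      fun a ha => pathOfList_left_unique hl ha ⟨n, List.getElem?_eq_getElem hn, hm⟩⟩
  · have hreach : ∀ (n : ℕ) b, l[n]? = some b → ReflTransGen (pathOfList l) (l.head hne) b := by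
      intro n
      induction n with
      | zero => exact fun b hb => Option.some.inj (hhead.symm.trans hb) ▸ ReflTransGen.refl
      | succ n ih =>
        intro b hb
        have hn : n < l.length := by have := (List.getElem?_eq_some_iff.mp hb).1; omega
        exact (ih _ (List.getElem?_eq_getElem hn)).tail ⟨n, List.getElem?_eq_getElem hn, hb⟩
    intro b
    obtain ⟨n, hn⟩ := List.mem_iff_getElem?.mp (hall b)
    exact hreach n b hn

theorem exists_pathOfList_of_ne_getLast {t a : α} (hlast : l.getLast? = some t) (ha : a ∈ l)
    (hat : a ≠ t) : ∃ b, pathOfList l a b := by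
  obtain ⟨n, hn⟩ := List.mem_iff_getElem?.mp ha
  by_cases hsucc : n + 1 < l.length
  · exact ⟨l[n + 1], n, hn, List.getElem?_eq_getElem hsucc⟩
  · have : n = l.length - 1 := by have := (List.getElem?_eq_some_iff.mp hn).1; omega
    rw [List.getLast?_eq_getElem?, ← this, hn] at hlast
    exact absurd (Option.some.inj hlast) hat

end PathOfList

/-- The digraph `D_k`, with the new vertices indexed by `β = Fin k`. -/
def addPendants (D : α → α → Prop) (v : α) (a b : α ⊕ β) : Prop :=
  (∃ x y, D x y ∧ a = .inl x ∧ b = .inl y) ∨ (a = .inl v ∧ ∃ i, b = .inr i)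

section AddPendants

variable {D : α → α → Prop} {v : α}

theorem exists_isOutBranching_addPendants [Finite β] [Nonempty β] {l : List α}
    (hchain : l.IsChain D) (hl : l.Nodup) (hall : ∀ a, a ∈ l) (hlast : l.getLast? = some v) :
    ∃ T ρ, IsOutBranching (addPendants D v : α ⊕ β → α ⊕ β → Prop) T ρ ∧
      numLeaves T ≤ Nat.card β := by
  have hne : l ≠ [] := List.ne_nil_of_mem (hall v)
  refine ⟨attachLeaves (pathOfList l) v, .inl (l.head hne),
    isOutBranching_attachLeaves (isOutBranching_pathOfList hchain hl hall hne)
      (fun a b h => .inl ⟨a, b, h, rfl, rfl⟩) (fun i => .inr ⟨rfl, i, rfl⟩), ?_⟩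
  exact numLeaves_attachLeaves_le fun a => exists_pathOfList_of_ne_getLast hlast (hall a)

namespace IsOutBranching

variable {T : α ⊕ β → α ⊕ β → Prop} {ρ : α ⊕ β}

theorem not_rel_inr (hT : IsOutBranching (addPendants D v) T ρ) (i : β) (b : α ⊕ β) :
    ¬ T (.inr i) b := fun h => by
  obtain ⟨_, _, -, h, -⟩ | ⟨h, -⟩ := hT.1 _ _ h <;> exact Sum.inr_ne_inl h

theorem exists_eq_inl_of_rel_inl (hT : IsOutBranching (addPendants D v) T ρ)
    {a : α ⊕ β} {y : α} (h : T a (.inl y)) : ∃ x, a = .inl x := by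
  rcases hT.1 _ _ h with ⟨x, y, -, rfl, -⟩ | ⟨-, i, h⟩
  exacts [⟨x, rfl⟩, (Sum.inl_ne_inr h).elim]

theorem exists_root_eq_inl (hT : IsOutBranching (addPendants D v) T ρ) : ∃ r, ρ = .inl r := by
  rcases ρ with r | i
  · exact ⟨r, rfl⟩
  · rcases (hT.2.2.2 (.inl v)).cases_head with h | ⟨b, h, -⟩
    exacts [(Sum.inr_ne_inl h).elim, (hT.not_rel_inr i b h).elim]

theorem exists_rel_inl_inl_of_numLeaves_le [Finite α] [Finite β]
    (hT : IsOutBranching (addPendants D v) T ρ)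
    (hleaves : numLeaves T ≤ Nat.card β) {x : α} (hx : x ≠ v) : ∃ y, T (.inl x) (.inl y) := by
  obtain ⟨y | i, h⟩ := exists_rel_of_numLeaves_le (S := Set.range Sum.inr)
    (by rintro _ ⟨i, rfl⟩; exact hT.not_rel_inr i)
    (by rwa [Set.ncard_range_of_injective Sum.inr_injective]) (a := .inl x) (by simp)
  · exact ⟨y, h⟩
  · obtain ⟨_, _, -, -, h⟩ | ⟨h, -⟩ := hT.1 _ _ h
    exacts [(Sum.inr_ne_inl h).elim, absurd (Sum.inl_injective h) hx]

theorem exists_hamiltonian_path_of_numLeaves_le [Finite α] [Finite β]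
    (hT : IsOutBranching (addPendants D v) T ρ)
    (hleaves : numLeaves T ≤ Nat.card β) :
    ∃ l : List α, l.IsChain D ∧ l.Nodup ∧ (∀ a, a ∈ l) ∧ l.getLast? = some v := by
  obtain ⟨r, rfl⟩ := hT.exists_root_eq_inl
  obtain ⟨l, hchain, hl, hall, hlast⟩ := (hT.comap Sum.inl_injective
    fun _ _ => hT.exists_eq_inl_of_rel_inl).exists_hamiltonian_path
      fun _ => hT.exists_rel_inl_inl_of_numLeaves_le hleaves
  refine ⟨l, hchain.imp ?_, hl, hall, hlast⟩
  rintro a b (⟨x, y, h, hx, hy⟩ | ⟨-, i, h⟩)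
  exacts [Sum.inl_injective hx ▸ Sum.inl_injective hy ▸ h, (Sum.inl_ne_inr h).elim]

end IsOutBranching

end AddPendants

end

/-- Let `D_k` be obtained from `D` by adding `k` new vertices `v_1, …, v_k` (the
summand `Fin k`) and the arcs `(v, v_i)`. Then `D` has a Hamiltonian directed path
terminating at `v` iff `D_k` has an out-branching with at most `k` leaves. -/
theorem stmt_6 {V : Type*} [Fintype V] (D : V → V → Prop) (v : V) (k : ℕ) (hk : 1 ≤ k) :
    (∃ l : List V, l.Chain' D ∧ l.Nodup ∧ (∀ x : V, x ∈ l) ∧ l.getLast? = some v) ↔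
      (∃ (T : (V ⊕ Fin k) → (V ⊕ Fin k) → Prop) (ρ : V ⊕ Fin k),
        IsOutBranching
          (fun a b => (∃ x y, D x y ∧ a = Sum.inl x ∧ b = Sum.inl y) ∨
            (a = Sum.inl v ∧ ∃ i : Fin k, b = Sum.inr i)) T ρ ∧
        numLeaves T ≤ k) := by
  constructor
  · rintro ⟨l, hchain, hl, hall, hlast⟩
    have : Nonempty (Fin k) := ⟨⟨0, hk⟩⟩
    obtain ⟨T, ρ, hT, hleaves⟩ :=
      exists_isOutBranching_addPendants (β := Fin k) hchain hl hall hlast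
    exact ⟨T, ρ, hT, by simpa using hleaves⟩
  · rintro ⟨T, ρ, hT, hleaves⟩
    exact hT.exists_hamiltonian_path_of_numLeaves_le (by simpa using hleaves)
end

section
/- Let D be a digraph, y ∈ V(D), n = |V(D)|, k ≥ 2, and p = floor(n/(k-1)). Let H be obtained from D by adding a disjoint star digraph with center vertex s and p-1 out-neighbors, plus the arc (s,y). Then the minimum number of leaves over all out-branchings of H is at most |V(H)|/k if and only if D has an out-branching rooted at y with exactly 1 leaf (i.e., a Hamiltonian directed path starting at y). -/
lemma leaf_exists {α : Type*} [Fintype α] {D T : α → α → Prop} {r : α}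
    (h : IsOutBranching D T r) : 1 ≤ numLeaves T := by
  have hne : {v | ∀ w, ¬ T v w}.Nonempty := by
    by_contra hno
    rw [Set.not_nonempty_iff_eq_empty] at hno
    have hall : ∀ v, ∃ w, T v w := by
      intro v
      by_contra hv
      push_neg at hv
      exact Set.eq_empty_iff_forall_notMem.mp hno v (fun w => hv w)
    choose f hf using hall
    have key : ∀ i j : ℕ, f^[j + i + 1] r = f^[i] r → False := by
      intro i
      induction i with
      | zero =>
        intro j hj
        have h2 := hf (f^[j] r)
        rw [← Function.iterate_succ_apply' f j r] at h2
        simp only [Nat.add_zero, Function.iterate_zero_apply] at hj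
        rw [hj] at h2
        exact h.2.1 _ h2
      | succ i ih =>
        intro j hj
        by_cases hr : f^[i+1] r = r
        · have h2 := hf (f^[i] r)
          rw [← Function.iterate_succ_apply' f i r, hr] at h2
          exact h.2.1 _ h2
        · obtain ⟨u, hu, hun⟩ := h.2.2.1 _ hr
          have e1 : T (f^[i] r) (f^[i+1] r) := by
            have h2 := hf (f^[i] r)
            rwa [← Function.iterate_succ_apply' f i r] at h2
          have e2 : T (f^[j+i+1] r) (f^[i+1] r) := by
            have h2 := hf (f^[j+i+1] r)
            rw [← Function.iterate_succ_apply' f (j+i+1) r] at h2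
            have hidx : j + (i+1) + 1 = j + i + 1 + 1 := by omega
            rw [hidx] at hj
            rwa [hj] at h2
          exact ih j ((hun _ e2).trans (hun _ e1).symm)
    obtain ⟨a, b, hab, he⟩ := Fintype.exists_ne_map_eq_of_card_lt
      (fun i : Fin (Fintype.card α + 1) => f^[(i : ℕ)] r)
      (by simpa using Nat.lt_succ_self _)
    rcases lt_or_gt_of_ne hab with hlt | hgt
    · have hv : (a : ℕ) < (b : ℕ) := hlt
      apply key (a : ℕ) ((b : ℕ) - (a : ℕ) - 1)
      have hidx : (b : ℕ) - (a : ℕ) - 1 + (a : ℕ) + 1 = (b : ℕ) := by omega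
      rw [hidx]
      exact he.symm
    · have hv : (b : ℕ) < (a : ℕ) := hgt
      apply key (b : ℕ) ((a : ℕ) - (b : ℕ) - 1)
      have hidx : (a : ℕ) - (b : ℕ) - 1 + (b : ℕ) + 1 = (a : ℕ) := by omega
      rw [hidx]
      exact he
  rw [numLeaves]
  exact (Set.ncard_pos (Set.toFinite _)).mpr hne

lemma leafcount {V : Type*} [Fintype V] {p : ℕ} (hp1 : 0 < p)
    (T : (V ⊕ Fin p) → (V ⊕ Fin p) → Prop)
    (h1 : ∀ (v : V) (w : Fin p), ¬ T (Sum.inl v) (Sum.inr w))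
    (h2 : ∀ j : Fin p, j ≠ ⟨0, hp1⟩ → ∀ b, ¬ T (Sum.inr j) b)
    (h3 : ∃ b, T (Sum.inr ⟨0, hp1⟩) b) :
    numLeaves T = numLeaves (fun a b => T (Sum.inl a) (Sum.inl b)) + (p - 1) := by
  have hset : {v : V ⊕ Fin p | ∀ w, ¬ T v w} =
      Sum.inl '' {v : V | ∀ w, ¬ T (Sum.inl v) (Sum.inl w)} ∪
      Sum.inr '' ({(⟨0, hp1⟩ : Fin p)}ᶜ : Set (Fin p)) := by
    ext a
    cases a with
    | inl v =>
      simp only [Set.mem_setOf_eq, Set.mem_union, Set.mem_image, Set.mem_compl_iff,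
        Set.mem_singleton_iff]
      constructor
      · intro hh
        exact Or.inl ⟨v, fun w => hh (Sum.inl w), rfl⟩
      · rintro (⟨x, hx, hxv⟩ | ⟨j, _, hj⟩)
        · obtain rfl := Sum.inl_injective hxv
          intro w
          cases w with
          | inl w' => exact hx w'
          | inr w' => exact h1 _ _
        · exact absurd hj (by simp)
    | inr j =>
      simp only [Set.mem_setOf_eq, Set.mem_union, Set.mem_image, Set.mem_compl_iff,
        Set.mem_singleton_iff]
      by_cases hj : j = ⟨0, hp1⟩
      · subst hj
        constructor
        · intro hh
          obtain ⟨b, hb⟩ := h3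
          exact absurd hb (hh b)
        · rintro (⟨x, _, hx⟩ | ⟨j', hj', hjj⟩)
          · exact absurd hx (by simp)
          · obtain rfl := Sum.inr_injective hjj
            exact absurd rfl hj'
      · constructor
        · intro _
          exact Or.inr ⟨j, hj, rfl⟩
        · intro _
          exact h2 j hj
  rw [numLeaves, hset, Set.ncard_union_eq, Set.ncard_image_of_injective _ Sum.inl_injective,
    Set.ncard_image_of_injective _ Sum.inr_injective]
  · have hc := Set.ncard_add_ncard_compl ({(⟨0, hp1⟩ : Fin p)} : Set (Fin p))
    simp only [Set.ncard_singleton, Nat.card_eq_fintype_card, Fintype.card_fin] at hc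
    rw [numLeaves]
    omega
  · rw [Set.disjoint_left]
    rintro a ⟨x, _, rfl⟩ ⟨j, _, hj⟩
    exact absurd hj (by simp)

/-- Let `D` have order `n`, `y ∈ V(D)`, `k ≥ 2` and `p = ⌊n/(k-1)⌋ ≥ 1`. Let `H` be
obtained from `D` by adding a disjoint star digraph on `Fin p` with center
`s = ⟨0, _⟩` and arcs from `s` to the other `p - 1` star vertices, together with the
arc `(s, y)`. Then `H` has an out-branching with at most `|V(H)|/k` leaves iff `D`
has an out-branching rooted at `y` with exactly one leaf (i.e. a Hamiltonian
directed path starting at `y`). -/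
theorem stmt_7 {V : Type*} [Fintype V] (D : V → V → Prop) (y : V) (k p : ℕ)
    (hk : 2 ≤ k) (hp : p = Fintype.card V / (k - 1)) (hp1 : 0 < p) :
    (∃ (T : (V ⊕ Fin p) → (V ⊕ Fin p) → Prop) (ρ : V ⊕ Fin p),
        IsOutBranching
          (fun a b => (∃ x z, D x z ∧ a = Sum.inl x ∧ b = Sum.inl z) ∨
            (a = Sum.inr ⟨0, hp1⟩ ∧ ∃ j : Fin p, j ≠ ⟨0, hp1⟩ ∧ b = Sum.inr j) ∨
            (a = Sum.inr ⟨0, hp1⟩ ∧ b = Sum.inl y)) T ρ ∧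
        (numLeaves T : ℝ) ≤ (Fintype.card (V ⊕ Fin p) : ℝ) / k) ↔
      (∃ T : V → V → Prop, IsOutBranching D T y ∧ numLeaves T = 1) := by
  obtain ⟨m, rfl⟩ : ∃ m, k = m + 2 := ⟨k - 2, by omega⟩
  have hk1 : (m + 2) - 1 = m + 1 := by omega
  rw [hk1] at hp
  have hkR : (0 : ℝ) < ((m + 2 : ℕ) : ℝ) := by exact_mod_cast Nat.succ_pos (m + 1)
  have hcard : Fintype.card (V ⊕ Fin p) = Fintype.card V + p := by
    simp [Fintype.card_sum]
  constructor
  · rintro ⟨T, ρ, hT, hle⟩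
    obtain ⟨hsub, hroot, huniq, hreach⟩ := hT
    -- the root is the star center
    have hρ : ρ = Sum.inr ⟨0, hp1⟩ := by
      rcases (hreach (Sum.inr ⟨0, hp1⟩)).cases_tail with heq | ⟨c, _, hc⟩
      · exact heq.symm
      · rcases hsub _ _ hc with ⟨x, z, _, _, hz⟩ | ⟨_, j, hj, hjj⟩ | ⟨_, hy⟩
        · exact absurd hz (by simp)
        · exact absurd (Sum.inr_injective hjj) (Ne.symm hj)
        · exact absurd hy (by simp)
    subst hρ
    -- crossing lemma
    have cross : ∀ b, Relation.ReflTransGen T (Sum.inr ⟨0, hp1⟩) b → ∀ v : V,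
        b = Sum.inl v → T (Sum.inr ⟨0, hp1⟩) (Sum.inl y) ∧
          Relation.ReflTransGen (fun a b => T (Sum.inl a) (Sum.inl b)) y v := by
      intro b hb
      induction hb with
      | refl => intro v hv; exact absurd hv (by simp)
      | tail hab hbc ih =>
        intro v hv
        subst hv
        rcases hsub _ _ hbc with ⟨x, z, _, hbx, _⟩ | ⟨_, j, _, hvj⟩ | ⟨hb0, hvy⟩
        · subst hbx
          obtain ⟨hy, hRT⟩ := ih x rfl
          exact ⟨hy, hRT.tail hbc⟩
        · exact absurd hvj (by simp)
        · subst hb0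
          obtain rfl : v = y := Sum.inl_injective hvy
          exact ⟨hbc, Relation.ReflTransGen.refl⟩
    have hsy : T (Sum.inr ⟨0, hp1⟩) (Sum.inl y) :=
      (cross _ (hreach (Sum.inl y)) y rfl).1
    have hreach' : ∀ v : V,
        Relation.ReflTransGen (fun a b => T (Sum.inl a) (Sum.inl b)) y v :=
      fun v => (cross _ (hreach (Sum.inl v)) v rfl).2
    -- restriction is an out-branching of D rooted at y
    have hsub' : ∀ a b : V, T (Sum.inl a) (Sum.inl b) → D a b := by
      intro a b hab
      rcases hsub _ _ hab with ⟨x, z, hD, hax, hbz⟩ | ⟨ha, _⟩ | ⟨ha, _⟩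
      · obtain rfl : a = x := Sum.inl_injective hax
        obtain rfl : b = z := Sum.inl_injective hbz
        exact hD
      · exact absurd ha (by simp)
      · exact absurd ha (by simp)
    have hny : ∀ u : V, ¬ T (Sum.inl u) (Sum.inl y) := by
      intro u hu
      obtain ⟨u0, _, hun⟩ := huniq (Sum.inl y) (by simp)
      have e1 : Sum.inl u = u0 := hun _ hu
      have e2 : (Sum.inr ⟨0, hp1⟩ : V ⊕ Fin p) = u0 := hun _ hsy
      exact absurd (e1.trans e2.symm) (by simp)
    have huniq' : ∀ v : V, v ≠ y → ∃! u : V, T (Sum.inl u) (Sum.inl v) := by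
      intro v hv
      obtain ⟨u0, hu0, hun⟩ := huniq (Sum.inl v) (by simp)
      rcases hsub _ _ hu0 with ⟨x, z, _, hax, _⟩ | ⟨_, j, _, hvj⟩ | ⟨_, hvy⟩
      · subst hax
        refine ⟨x, hu0, ?_⟩
        intro u' hu'
        exact Sum.inl_injective (hun _ hu')
      · exact absurd hvj (by simp)
      · exact absurd (Sum.inl_injective hvy) hv
    have hT' : IsOutBranching D (fun a b => T (Sum.inl a) (Sum.inl b)) y :=
      ⟨hsub', hny, huniq', hreach'⟩
    refine ⟨_, hT', ?_⟩
    -- leaf counting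
    have h1c : ∀ (v : V) (w : Fin p), ¬ T (Sum.inl v) (Sum.inr w) := by
      intro v w hvw
      rcases hsub _ _ hvw with ⟨x, z, _, _, hbz⟩ | ⟨ha, _⟩ | ⟨ha, _⟩
      · exact absurd hbz (by simp)
      · exact absurd ha (by simp)
      · exact absurd ha (by simp)
    have h2c : ∀ j : Fin p, j ≠ ⟨0, hp1⟩ → ∀ b, ¬ T (Sum.inr j) b := by
      intro j hj b hb
      rcases hsub _ _ hb with ⟨x, z, _, ha, _⟩ | ⟨ha, _⟩ | ⟨ha, _⟩
      · exact absurd ha (by simp)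
      · exact hj (Sum.inr_injective ha)
      · exact hj (Sum.inr_injective ha)
    have hLC := leafcount hp1 T h1c h2c ⟨_, hsy⟩
    have hl1 : 1 ≤ numLeaves (fun a b => T (Sum.inl a) (Sum.inl b)) := leaf_exists hT'
    rw [hLC, hcard] at hle
    set ℓ := numLeaves (fun a b => T (Sum.inl a) (Sum.inl b)) with hldef
    set n := Fintype.card V with hn
    -- arithmetic
    by_contra hne
    have hl2 : 2 ≤ ℓ := by omega
    have hle2 := (le_div_iff₀ hkR).mp hle
    have hle' : (ℓ + (p - 1)) * (m + 2) ≤ n + p := by exact_mod_cast hle2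
    have hx : (p + 1) * (m + 2) ≤ n + p :=
      le_trans (Nat.mul_le_mul_right _ (by omega)) hle'
    have hy2 : (p + 1) * (m + 1) ≤ n := by nlinarith [hx]
    have hfin : p + 1 ≤ n / (m + 1) := (Nat.le_div_iff_mul_le (by omega)).mpr hy2
    rw [← hp] at hfin
    omega
  · rintro ⟨T', hT', hl⟩
    refine ⟨fun a b => (∃ x z, T' x z ∧ a = Sum.inl x ∧ b = Sum.inl z) ∨
        (a = Sum.inr ⟨0, hp1⟩ ∧ ∃ j : Fin p, j ≠ ⟨0, hp1⟩ ∧ b = Sum.inr j) ∨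
        (a = Sum.inr ⟨0, hp1⟩ ∧ b = Sum.inl y), Sum.inr ⟨0, hp1⟩, ⟨?_, ?_, ?_, ?_⟩, ?_⟩
    · rintro u v (⟨x, z, hxz, rfl, rfl⟩ | h | h)
      · exact Or.inl ⟨x, z, hT'.1 x z hxz, rfl, rfl⟩
      · exact Or.inr (Or.inl h)
      · exact Or.inr (Or.inr h)
    · rintro u (⟨x, z, _, _, hz⟩ | ⟨_, j, hj, hjj⟩ | ⟨_, hy⟩)
      · exact absurd hz (by simp)
      · exact hj (Sum.inr_injective hjj).symm
      · exact absurd hy (by simp)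
    · intro v hv
      cases v with
      | inl x =>
        by_cases hxy : x = y
        · subst hxy
          refine ⟨Sum.inr ⟨0, hp1⟩, Or.inr (Or.inr ⟨rfl, rfl⟩), ?_⟩
          rintro u (⟨x', z, hxz, rfl, hz⟩ | ⟨rfl, j, hj, hjj⟩ | ⟨rfl, _⟩)
          · obtain rfl : z = x := Sum.inl_injective hz.symm
            exact absurd hxz (hT'.2.1 x')
          · exact absurd hjj (by simp)
          · rfl
        · obtain ⟨u, hu, hun⟩ := hT'.2.2.1 x hxy
          refine ⟨Sum.inl u, Or.inl ⟨u, x, hu, rfl, rfl⟩, ?_⟩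
          rintro u' (⟨x', z, hxz, rfl, hz⟩ | ⟨rfl, j, hj, hjj⟩ | ⟨rfl, hy2⟩)
          · obtain rfl : z = x := Sum.inl_injective hz.symm
            exact congrArg Sum.inl (hun x' hxz)
          · exact absurd hjj (by simp)
          · exact absurd (Sum.inl_injective hy2) hxy
      | inr j =>
        have hj : j ≠ ⟨0, hp1⟩ := fun h => hv (by rw [h])
        refine ⟨Sum.inr ⟨0, hp1⟩, Or.inr (Or.inl ⟨rfl, j, hj, rfl⟩), ?_⟩
        rintro u (⟨x', z, _, _, hz⟩ | ⟨rfl, _⟩ | ⟨rfl, _⟩)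
        · exact absurd hz (by simp)
        · rfl
        · rfl
    · intro v
      cases v with
      | inl x =>
        have h0 := hT'.2.2.2 x
        induction h0 with
        | refl => exact Relation.ReflTransGen.single (Or.inr (Or.inr ⟨rfl, rfl⟩))
        | tail hab hbc ih => exact ih.tail (Or.inl ⟨_, _, hbc, rfl, rfl⟩)
      | inr j =>
        by_cases hj : j = ⟨0, hp1⟩
        · subst hj
          exact Relation.ReflTransGen.refl
        · exact Relation.ReflTransGen.single (Or.inr (Or.inl ⟨rfl, j, hj, rfl⟩))
    · have h1c : ∀ (v : V) (w : Fin p),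
          ¬ (fun (a b : V ⊕ Fin p) => (∃ x z, T' x z ∧ a = Sum.inl x ∧ b = Sum.inl z) ∨
            (a = Sum.inr ⟨0, hp1⟩ ∧ ∃ j : Fin p, j ≠ ⟨0, hp1⟩ ∧ b = Sum.inr j) ∨
            (a = Sum.inr ⟨0, hp1⟩ ∧ b = Sum.inl y)) (Sum.inl v) (Sum.inr w) := by
        rintro v w (⟨x, z, _, _, hz⟩ | ⟨ha, _⟩ | ⟨ha, _⟩)
        · exact absurd hz (by simp)
        · exact absurd ha (by simp)
        · exact absurd ha (by simp)
      have h2c : ∀ j : Fin p, j ≠ ⟨0, hp1⟩ → ∀ b,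
          ¬ (fun (a b : V ⊕ Fin p) => (∃ x z, T' x z ∧ a = Sum.inl x ∧ b = Sum.inl z) ∨
            (a = Sum.inr ⟨0, hp1⟩ ∧ ∃ j : Fin p, j ≠ ⟨0, hp1⟩ ∧ b = Sum.inr j) ∨
            (a = Sum.inr ⟨0, hp1⟩ ∧ b = Sum.inl y)) (Sum.inr j) b := by
        rintro j hj b (⟨x, z, _, ha, _⟩ | ⟨ha, _⟩ | ⟨ha, _⟩)
        · exact absurd ha (by simp)
        · exact hj (Sum.inr_injective ha)
        · exact hj (Sum.inr_injective ha)
      have hLC := leafcount hp1 (fun (a b : V ⊕ Fin p) =>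
          (∃ x z, T' x z ∧ a = Sum.inl x ∧ b = Sum.inl z) ∨
            (a = Sum.inr ⟨0, hp1⟩ ∧ ∃ j : Fin p, j ≠ ⟨0, hp1⟩ ∧ b = Sum.inr j) ∨
            (a = Sum.inr ⟨0, hp1⟩ ∧ b = Sum.inl y)) h1c h2c
          ⟨Sum.inl y, Or.inr (Or.inr ⟨rfl, rfl⟩)⟩
      have hres : (fun a b : V =>
          (fun (a b : V ⊕ Fin p) => (∃ x z, T' x z ∧ a = Sum.inl x ∧ b = Sum.inl z) ∨
            (a = Sum.inr ⟨0, hp1⟩ ∧ ∃ j : Fin p, j ≠ ⟨0, hp1⟩ ∧ b = Sum.inr j) ∨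
            (a = Sum.inr ⟨0, hp1⟩ ∧ b = Sum.inl y)) (Sum.inl a : V ⊕ Fin p) (Sum.inl b)) = T' := by
        funext a b
        rw [eq_iff_iff]
        constructor
        · rintro (⟨x, z, hxz, hax, hbz⟩ | ⟨ha, _⟩ | ⟨ha, _⟩)
          · obtain rfl : a = x := Sum.inl_injective hax
            obtain rfl : b = z := Sum.inl_injective hbz
            exact hxz
          · exact absurd ha (by simp)
          · exact absurd ha (by simp)
        · intro h
          exact Or.inl ⟨a, b, h, rfl, rfl⟩
      rw [hres, hl] at hLC
      rw [hLC, hcard]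
      rw [le_div_iff₀ hkR]
      have h1 : p * (m + 1) ≤ Fintype.card V := by
        rw [hp]; exact Nat.div_mul_le_self _ _
      have h2 : (1 + (p - 1)) * (m + 2) ≤ Fintype.card V + p := by
        have e1 : 1 + (p - 1) = p := by omega
        have e2 : p * (m + 2) = p * (m + 1) + p := by ring
        rw [e1, e2]
        exact Nat.add_le_add_right h1 p
      exact_mod_cast h2
end

section
/- Let T be an out-branching of a digraph D. Then T is minimal (no 1-change strictly decreases the number of leaves) if and only if for every arc (u,v) ∈ A(D) \ A(T) that is not T-backward, either u is an internal vertex of T or the parent of v in T has out-degree 1 in T. -/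
/-- The 1-change for the arc `(u,v)`: replace the tree arc `(w,v)` (where `w = p(v)`
is the parent of `v` in `T`) by the arc `(u,v)`. -/
def oneChange {α : Type*} (T : α → α → Prop) (w v u : α) : α → α → Prop :=
  fun a b => (T a b ∧ ¬(a = w ∧ b = v)) ∨ (a = u ∧ b = v)

/-- `T` is a minimal out-branching of `D` rooted at `r`: no 1-change for an arc
`(u,v) ∈ A(D) \ A(T)` yields an out-branching with fewer leaves. -/
def IsMinimalOB {α : Type*} (D T : α → α → Prop) (r : α) : Prop :=
  IsOutBranching D T r ∧
  ∀ u v w, D u v → ¬ T u v → T w v →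
    IsOutBranching D (oneChange T w v u) r →
    numLeaves T ≤ numLeaves (oneChange T w v u)

/-- An out-branching has no (nontrivial) cycles. -/
lemma ob_acyclic {α : Type*} (D T : α → α → Prop) (r : α) (h : IsOutBranching D T r) :
    ∀ x, ¬ Relation.TransGen T x x := by
  have key : ∀ x, Relation.ReflTransGen T r x → ¬ Relation.TransGen T x x := by
    intro x hx
    induction hx with
    | refl =>
      intro hc
      obtain ⟨y, -, hy⟩ := Relation.TransGen.tail'_iff.mp hc
      exact h.2.1 y hy
    | @tail b c hb hbc ih =>
      intro hc
      obtain ⟨y, hcy, hyc⟩ := Relation.TransGen.tail'_iff.mp hc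
      by_cases hcr : c = r
      · exact h.2.1 y (hcr ▸ hyc)
      · obtain ⟨p, hp, hp'⟩ := h.2.2.1 c hcr
        have hyb : y = b := (hp' y hyc).trans (hp' b hbc).symm
        exact ih (Relation.TransGen.head' hbc (hyb ▸ hcy))
  exact fun x => key x (h.2.2.2 x)

/-- A `T`-path starting at `v` lifts to the 1-change (it cannot use the arc `(w,v)`,
else `T` would have a cycle). -/
lemma ob_lift {α : Type*} (T : α → α → Prop) (w v u : α)
    (hac : ∀ x, ¬ Relation.TransGen T x x) (hwv : T w v) :
    ∀ x, Relation.ReflTransGen T v x → Relation.ReflTransGen (oneChange T w v u) v x := by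
  intro x hx
  induction hx with
  | refl => exact Relation.ReflTransGen.refl
  | @tail b c hb hbc ih =>
    by_cases hcase : b = w ∧ c = v
    · exact absurd (Relation.TransGen.tail' (hcase.1 ▸ hb) hwv) (hac v)
    · exact ih.tail (Or.inl ⟨hbc, hcase⟩)

/-- A `T`-path either lifts to the 1-change, or passes through `v`. -/
lemma ob_split {α : Type*} (T : α → α → Prop) (w v u : α) :
    ∀ a x, Relation.ReflTransGen T a x →
      Relation.ReflTransGen (oneChange T w v u) a x ∨ Relation.ReflTransGen T v x := by
  intro a x hx
  induction hx with
  | refl => exact Or.inl Relation.ReflTransGen.refl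
  | @tail b c hb hbc ih =>
    by_cases hcase : b = w ∧ c = v
    · exact Or.inr (hcase.2 ▸ Relation.ReflTransGen.refl)
    · rcases ih with h | h
      · exact Or.inl (h.tail (Or.inl ⟨hbc, hcase⟩))
      · exact Or.inr (h.tail hbc)

/-- An out-branching `T` of `D` is minimal iff for every arc `(u,v) ∈ A(D) \ A(T)`
which is not `T`-backward (i.e. there is no directed path in `T` from `v` to `u`),
either `u` is an internal vertex of `T` or the parent of `v` in `T` has out-degree 1
in `T`. -/
theorem stmt_8 {V : Type*} [Fintype V] (D T : V → V → Prop) (r : V)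
    (hT : IsOutBranching D T r) :
    IsMinimalOB D T r ↔
      ∀ u v, D u v → ¬ T u v → ¬ Relation.ReflTransGen T v u →
        ((∃ z, T u z) ∨ ∀ w, T w v → ∀ z, T w z → z = v) := by
  classical
  have hsub := hT.1
  have hnr := hT.2.1
  have huniq := hT.2.2.1
  have hreach := hT.2.2.2
  have hac := ob_acyclic D T r hT
  constructor
  · -- minimal → condition
    intro hmin u v hD hnT hback
    by_contra hc
    push_neg at hc
    obtain ⟨hu, w, hwv, z₀, hwz, hzv⟩ := hc
    have hvr : v ≠ r := fun h => hnr w (h ▸ hwv)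
    have huw : u ≠ w := fun h => hnT (h ▸ hwv)
    set T' := oneChange T w v u with hT'
    -- T' is an out-branching
    have hOB' : IsOutBranching D T' r := by
      refine ⟨?_, ?_, ?_, ?_⟩
      · rintro a b (⟨h1, _⟩ | ⟨ha, hb⟩)
        · exact hsub a b h1
        · exact ha ▸ hb ▸ hD
      · rintro a (⟨h1, _⟩ | ⟨_, hb⟩)
        · exact hnr a h1
        · exact hvr hb.symm
      · intro b hbr
        by_cases hbv : b = v
        · subst hbv
          refine ⟨u, Or.inr ⟨rfl, rfl⟩, ?_⟩
          rintro y (⟨h1, h2⟩ | ⟨h1, _⟩)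
          · obtain ⟨p, hp, hp'⟩ := huniq b hbr
            exact absurd ⟨(hp' y h1).trans ((hp' w hwv).symm), rfl⟩ h2
          · exact h1
        · obtain ⟨p, hp, hp'⟩ := huniq b hbr
          refine ⟨p, Or.inl ⟨hp, fun h => hbv h.2⟩, ?_⟩
          rintro y (⟨h1, _⟩ | ⟨_, h2⟩)
          · exact hp' y h1
          · exact absurd h2 hbv
      · have hru' : Relation.ReflTransGen T' r u := by
          rcases ob_split T w v u r u (hreach u) with h | h
          · exact h
          · exact absurd h hback
        have hrv' : Relation.ReflTransGen T' r v := hru'.tail (Or.inr ⟨rfl, rfl⟩)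
        intro x
        rcases ob_split T w v u r x (hreach x) with h | h
        · exact h
        · exact hrv'.trans (ob_lift T w v u hac hwv x h)
    have hle := hmin.2 u v w hD hnT hwv hOB'
    -- leaves of T' = leaves of T minus u
    have hset : {x | ∀ b, ¬ T' x b} = {x | ∀ b, ¬ T x b} \ {u} := by
      ext x
      simp only [Set.mem_setOf_eq, Set.mem_diff, Set.mem_singleton_iff]
      constructor
      · intro h
        have hxu : x ≠ u := by
          intro hx
          exact h v (Or.inr ⟨hx, rfl⟩)
        refine ⟨?_, hxu⟩
        intro b hb
        by_cases hcase : x = w ∧ b = v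
        · exact h z₀ (Or.inl ⟨hcase.1 ▸ hwz, fun h' => hzv h'.2⟩)
        · exact h b (Or.inl ⟨hb, hcase⟩)
      · rintro ⟨h, hxu⟩ b (⟨h1, _⟩ | ⟨h1, _⟩)
        · exact h b h1
        · exact hxu h1
    have humem : u ∈ {x | ∀ b, ¬ T x b} := hu
    have hlt : numLeaves T' < numLeaves T := by
      unfold numLeaves
      rw [hset]
      exact Set.ncard_diff_singleton_lt_of_mem humem (Set.toFinite _)
    rw [← hT'] at hle
    exact absurd hle (Nat.not_le.mpr hlt)
  · -- condition → minimal
    intro hcond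
    refine ⟨hT, ?_⟩
    intro u v w hD hnT hwv hOB'
    set T' := oneChange T w v u with hT'
    by_cases hback : Relation.ReflTransGen T v u
    · exfalso
      have hvu' : Relation.ReflTransGen T' v u := ob_lift T w v u hac hwv u hback
      exact ob_acyclic D T' r hOB' v (Relation.TransGen.tail' hvu' (Or.inr ⟨rfl, rfl⟩))
    · by_cases hu : ∃ z, T u z
      · -- u internal: leaves T ⊆ leaves T'
        apply Set.ncard_le_ncard ?_ (Set.toFinite _)
        intro x hx
        obtain ⟨z, huz⟩ := hu
        have hxu : x ≠ u := fun h => hx z (h ▸ huz)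
        rintro b (⟨h1, _⟩ | ⟨h1, _⟩)
        · exact hx b h1
        · exact hxu h1
      · rcases hcond u v hD hnT hback with hint | hdeg
        · exact absurd hint hu
        · push_neg at hu
          have huw : u ≠ w := fun h => hnT (h ▸ hwv)
          have hwonly : ∀ z, T w z → z = v := hdeg w hwv
          -- inject leaves of T into leaves of T' via u ↦ w
          apply Set.ncard_le_ncard_of_injOn (fun x => if x = u then w else x) ?_ ?_
            (Set.toFinite _)
          · intro x hx
            simp only [Set.mem_setOf_eq] at hx ⊢
            split_ifs with h
            · rintro b (⟨h1, h2⟩ | ⟨h1, _⟩)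
              · exact h2 ⟨rfl, hwonly b h1⟩
              · exact huw h1.symm
            · rintro b (⟨h1, _⟩ | ⟨h1, _⟩)
              · exact hx b h1
              · exact h h1
          · intro x hx y hy hxy
            simp only at hxy
            split_ifs at hxy with h1 h2 h3
            · exact h1.trans h2.symm
            · exact absurd (hxy ▸ hwv) (hy v)
            · exact absurd (hxy.symm ▸ hwv : T x v) (hx v)
            · exact hxy
end

section
/- Let D be a digraph with an out-branching and let T be a minimal out-branching of D with more than n-k leaves (n = |V(D)|, k ≥ 1). Then the set U consisting of all internal vertices of T together with all leaves u of T whose parent p(u) has out-degree 1 in T is a vertex cover of the underlying graph of D, and |U| ≤ 2k-2. -/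
/-- If `T` is a minimal out-branching of a digraph `D` of order `n` with more than
`n - k` leaves (`k ≥ 1`), then the set `U` of internal vertices of `T` together with
the leaves that are the unique child of their parent is a vertex cover of the
underlying graph of `D` of size at most `2k - 2`. -/
theorem stmt_10 {V : Type*} [Fintype V] (D T : V → V → Prop) (r : V) (k : ℕ)
    (hk : 1 ≤ k)
    (hT : IsMinimalOB D T r)
    (hleaves : Fintype.card V - k < numLeaves T) :
    (∀ a b, D a b → a ≠ b →
        a ∈ ({v | ∃ z, T v z} ∪
          {u | (∀ z, ¬ T u z) ∧ ∃ w, T w u ∧ ∀ z, T w z → z = u} : Set V) ∨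
        b ∈ ({v | ∃ z, T v z} ∪
          {u | (∀ z, ¬ T u z) ∧ ∃ w, T w u ∧ ∀ z, T w z → z = u} : Set V)) ∧
      ({v | ∃ z, T v z} ∪
        {u | (∀ z, ¬ T u z) ∧ ∃ w, T w u ∧ ∀ z, T w z → z = u} : Set V).ncard ≤
        2 * k - 2 := by
  obtain ⟨hOB, hMin⟩ := hT
  obtain ⟨hsub, hroot, hparent, hreach⟩ := hOB
  set I : Set V := {v | ∃ z, T v z} with hI
  set S : Set V := {u | (∀ z, ¬ T u z) ∧ ∃ w, T w u ∧ ∀ z, T w z → z = u} with hS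
  constructor
  · -- vertex cover
    intro a b hD hne
    by_contra hcon
    push_neg at hcon
    obtain ⟨ha, hb⟩ := hcon
    have hla : ∀ z, ¬ T a z := by
      intro z hz
      exact ha (Or.inl ⟨z, hz⟩)
    have hlb : ∀ z, ¬ T b z := by
      intro z hz
      exact hb (Or.inl ⟨z, hz⟩)
    have hbS : ¬ ∃ w, T w b ∧ ∀ z, T w z → z = b := by
      intro h
      exact hb (Or.inr ⟨hlb, h⟩)
    -- b ≠ r
    have hbr : b ≠ r := by
      intro hbeq
      subst hbeq
      rcases (hreach a).cases_head with h | ⟨c, hc, _⟩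
      · exact hne h.symm
      · exact hlb c hc
    obtain ⟨w, hwb, hwuniq⟩ := hparent b hbr
    have hother : ∃ z, T w z ∧ z ≠ b := by
      by_contra h
      push_neg at h
      exact hbS ⟨w, hwb, fun z hz => h z hz⟩
    obtain ⟨z0, hwz0, hz0b⟩ := hother
    have hnTab : ¬ T a b := hla b
    set T' := oneChange T w b a with hT'
    have hOB' : IsOutBranching D T' r := by
      refine ⟨?_, ?_, ?_, ?_⟩
      · rintro u v (⟨h, _⟩ | ⟨rfl, rfl⟩)
        · exact hsub u v h
        · exact hD
      · rintro u (⟨h, _⟩ | ⟨_, hv⟩)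
        · exact hroot u h
        · exact hbr hv.symm
      · intro v hv
        by_cases hvb : v = b
        · subst hvb
          refine ⟨a, Or.inr ⟨rfl, rfl⟩, ?_⟩
          rintro x (⟨hx, hne'⟩ | ⟨rfl, _⟩)
          · exact absurd ⟨hwuniq x hx, rfl⟩ hne'
          · rfl
        · obtain ⟨u, hu, huuniq⟩ := hparent v hv
          refine ⟨u, Or.inl ⟨hu, fun h => hvb h.2⟩, ?_⟩
          rintro x (⟨hx, _⟩ | ⟨_, hx2⟩)
          · exact huuniq x hx
          · exact absurd hx2 hvb
      · have key : ∀ v, Relation.ReflTransGen T r v → v = b ∨ Relation.ReflTransGen T' r v := by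
          intro v h
          induction h with
          | refl => exact Or.inr Relation.ReflTransGen.refl
          | tail h1 h2 ih =>
            rename_i c v'
            rcases ih with rfl | ih'
            · exact absurd h2 (hlb v')
            · by_cases hvb : v' = b
              · exact Or.inl hvb
              · exact Or.inr (ih'.tail (Or.inl ⟨h2, fun h => hvb h.2⟩))
        intro v
        rcases key v (hreach v) with rfl | h
        · rcases key a (hreach a) with rfl | h
          · exact absurd rfl hne
          · exact h.tail (Or.inr ⟨rfl, rfl⟩)
        · exact h
    have hmin := hMin a b w hD hnTab hwb hOB'
    have hleafeq : {v | ∀ x, ¬ T' v x} = {v | ∀ x, ¬ T v x} \ {a} := by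
      ext v
      simp only [Set.mem_setOf_eq, Set.mem_diff, Set.mem_singleton_iff]
      constructor
      · intro h
        have hva : v ≠ a := by
          intro hveq
          exact h b (Or.inr ⟨hveq, rfl⟩)
        refine ⟨fun x hx => ?_, hva⟩
        by_cases hc : v = w ∧ x = b
        · obtain ⟨rfl, rfl⟩ := hc
          exact h z0 (Or.inl ⟨hwz0, fun h' => hz0b h'.2⟩)
        · exact h x (Or.inl ⟨hx, hc⟩)
      · rintro ⟨hv, hva⟩ x (⟨h1, _⟩ | ⟨h1, _⟩)
        · exact hv x h1
        · exact hva h1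
    have haleaf : a ∈ {v | ∀ x, ¬ T v x} := hla
    have hlt : numLeaves T' < numLeaves T := by
      unfold numLeaves
      rw [hleafeq]
      exact Set.ncard_diff_singleton_lt_of_mem haleaf (Set.toFinite _)
    rw [hT'] at hlt
    omega
  · -- cardinality
    have hIfin : I.Finite := Set.toFinite _
    have hSfin : S.Finite := Set.toFinite _
    have hcompl : {v | ∀ x, ¬ T v x} = Iᶜ := by
      ext v
      simp [hI]
    have hsum : I.ncard + Iᶜ.ncard = Fintype.card V := by
      rw [Set.ncard_add_ncard_compl, Nat.card_eq_fintype_card]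
    have hIle : I.ncard ≤ Fintype.card V := by omega
    have hIk : I.ncard < k := by
      have : numLeaves T = Iᶜ.ncard := by
        unfold numLeaves
        rw [hcompl]
      omega
    -- injection from S to I via parent
    classical
    set f : V → V := fun u => if h : ∃ w, T w u ∧ ∀ z, T w z → z = u then h.choose else u
      with hf
    have hfS : ∀ u ∈ S, T (f u) u ∧ ∀ z, T (f u) z → z = u := by
      intro u hu
      obtain ⟨_, hex⟩ := hu
      simp only [hf, dif_pos hex]
      exact hex.choose_spec
    have hSI : S.ncard ≤ I.ncard := by
      apply Set.ncard_le_ncard_of_injOn f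
      · intro u hu
        exact ⟨u, (hfS u hu).1⟩
      · intro u hu u' hu' heq
        have h1 := hfS u hu
        have h2 := hfS u' hu'
        rw [heq] at h1
        exact h2.2 u h1.1
    have hUle : (I ∪ S).ncard ≤ I.ncard + S.ncard := Set.ncard_union_le I S
    omega
end
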